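/- arXiv:2603.27379 — 3 statements merged into one kernel-verified Lean document; each statement's English description precedes it below -/
import Mathlib

section
/- Assume λ_min(K_ϑ) > 0. For every τ with 0 < τ ≤ Δ/2 and every ω ∈ ℝ^d with min_{1≤ℓ≤s} |ω − θ_ℓ| ≥ τ, the MUSIC function q = q_U satisfies q(ω) ≥ 1 − ‖K‖²_{L∞(B_τᶜ)} − E₀(ϑ) − λ_max(K_ϑ) · max{ |1/λ_max(K_ϑ) − 1| , |1/λ_min(K_ϑ) − 1| }, where ‖K‖_{L∞(B_τᶜ)} := sup_{|ξ| ≥ τ} |K(ξ)|. -/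
noncomputable section

open MeasureTheory Real
open scoped Classical

/-- Second partial derivative `∂ⱼ∂ₖ f (x)` of `f : ℝ^d → ℝ`. -/
def pd2 {d : ℕ} (f : EuclideanSpace ℝ (Fin d) → ℝ) (x : EuclideanSpace ℝ (Fin d))
    (j k : Fin d) : ℝ :=
  iteratedFDeriv ℝ 2 f x ![EuclideanSpace.single j (1 : ℝ), EuclideanSpace.single k (1 : ℝ)]

/-- Fourth partial derivative `∂ⱼ²∂ₖ² f (x)` of `f : ℝ^d → ℝ`. -/
def pd4 {d : ℕ} (f : EuclideanSpace ℝ (Fin d) → ℝ) (x : EuclideanSpace ℝ (Fin d))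
    (j k : Fin d) : ℝ :=
  iteratedFDeriv ℝ 4 f x
    ![EuclideanSpace.single j (1 : ℝ), EuclideanSpace.single j (1 : ℝ),
      EuclideanSpace.single k (1 : ℝ), EuclideanSpace.single k (1 : ℝ)]

/-- The MUSIC function `q_W(ω) = ‖φ_ω - P_W φ_ω‖²` associated with the
orthogonal projection `P` onto a subspace `W ⊆ L²(ν)`. -/
def musicFun {d : ℕ} {ν : Measure (EuclideanSpace ℝ (Fin d))}
    (φ : EuclideanSpace ℝ (Fin d) → Lp ℂ 2 ν)
    (P : Lp ℂ 2 ν →L[ℂ] Lp ℂ 2 ν) (ω : EuclideanSpace ℝ (Fin d)) : ℝ :=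
  ‖φ ω - P (φ ω)‖ ^ 2

/-- `‖∇K‖_{L∞(B_τ)} = sup_{|ξ| ≤ τ} |∇K(ξ)|`. -/
def gradSupBall {d : ℕ} (K : EuclideanSpace ℝ (Fin d) → ℝ) (τ : ℝ) : ℝ :=
  ⨆ ξ : (Metric.closedBall (0 : EuclideanSpace ℝ (Fin d)) τ),
    ‖gradient K (ξ : EuclideanSpace ℝ (Fin d))‖

/-- `‖K‖_{L∞(B_τᶜ)} = sup_{|ξ| ≥ τ} |K(ξ)|`. -/
def kerSupCompl {d : ℕ} (K : EuclideanSpace ℝ (Fin d) → ℝ) (τ : ℝ) : ℝ :=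
  ⨆ ξ : {ξ : EuclideanSpace ℝ (Fin d) // τ ≤ ‖ξ‖}, |K ξ.1|

/-- The energy `E₀(ϑ) = sup_ω ∑_{ℓ : |ω-θ_ℓ| ≥ Δ/2} |K(ω-θ_ℓ)|²`. -/
def energy0 {d s : ℕ} (K : EuclideanSpace ℝ (Fin d) → ℝ)
    (θ : Fin s → EuclideanSpace ℝ (Fin d)) (Δ : ℝ) : ℝ :=
  ⨆ ω : EuclideanSpace ℝ (Fin d),
    ∑ ℓ ∈ Finset.univ.filter (fun ℓ => Δ / 2 ≤ dist ω (θ ℓ)), K (ω - θ ℓ) ^ 2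

/-- The energy `E₁(ϑ) = sup_ω ∑_{ℓ : |ω-θ_ℓ| ≥ Δ/2} |∇K(ω-θ_ℓ)|²`. -/
def energy1 {d s : ℕ} (K : EuclideanSpace ℝ (Fin d) → ℝ)
    (θ : Fin s → EuclideanSpace ℝ (Fin d)) (Δ : ℝ) : ℝ :=
  ⨆ ω : EuclideanSpace ℝ (Fin d),
    ∑ ℓ ∈ Finset.univ.filter (fun ℓ => Δ / 2 ≤ dist ω (θ ℓ)), ‖gradient K (ω - θ ℓ)‖ ^ 2

/-!
Write `P_U φ_ω = ∑ₖ cₖ φ_{θₖ}`. Since `⟪φ_α, φ_β⟫ = K(β - α)` is real, the real parts `a` of the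
coefficients solve the Gram system `K_ϑ a = k` with `k_ℓ = K(ω - θ_ℓ)`, and by Pythagoras
`q(ω) = 1 - ‖P_U φ_ω‖² = 1 - aᵀk = 1 - aᵀK_ϑ a`. Cauchy–Schwarz `(aᵀk)² ≤ ‖a‖²‖k‖²` together with
the Rayleigh bounds `λ_min ‖a‖² ≤ aᵀk ≤ λ_max ‖a‖²` gives `aᵀk ≤ ‖k‖² + λ_max (1/λ_min - 1)`
(split according to whether `‖a‖² ≤ aᵀk`). Finally at most one `θ_ℓ` lies within `Δ/2` of `ω`,
and for it `|K(ω - θ_ℓ)| ≤ ‖K‖_{L∞(B_τᶜ)}`, so `‖k‖² ≤ ‖K‖²_{L∞(B_τᶜ)} + E₀(ϑ)`.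
-/
section Steering

variable {E : Type*} [NormedAddCommGroup E] [InnerProductSpace ℝ E] [MeasurableSpace E]
  {ν : Measure E} {K : E → ℝ} {φ : E → Lp ℂ 2 ν}

def IsMeasurementKernel (ν : Measure E) (K : E → ℝ) : Prop :=
  ∀ ξ, (K ξ : ℂ) = (((ν Set.univ).toReal : ℂ))⁻¹ *
    ∫ x, Complex.exp ((2 * Real.pi * (inner ℝ ξ x : ℝ) : ℝ) * Complex.I) ∂ν

def IsSteeringFamily (φ : E → Lp ℂ 2 ν) : Prop :=
  ∀ ω, ⇑(φ ω) =ᵐ[ν] fun x => ((Real.sqrt ((ν Set.univ).toReal) : ℂ))⁻¹ *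
    Complex.exp ((2 * Real.pi * (inner ℝ ω x : ℝ) : ℝ) * Complex.I)

theorem inner_steering_eq (hK : IsMeasurementKernel ν K) (hφ : IsSteeringFamily φ) (α β : E) :
    inner ℂ (φ α) (φ β) = (K (β - α) : ℂ) := by
  set m := (ν Set.univ).toReal
  have hsqrt : ((Real.sqrt m : ℂ))⁻¹ * ((Real.sqrt m : ℂ))⁻¹ = (m : ℂ)⁻¹ := by
    rw [← mul_inv, ← Complex.ofReal_mul, Real.mul_self_sqrt ENNReal.toReal_nonneg]
  have hpointwise : (fun x => inner ℂ (φ α x) (φ β x)) =ᵐ[ν] fun x => (m : ℂ)⁻¹ *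
      Complex.exp ((2 * Real.pi * (inner ℝ (β - α) x : ℝ) : ℝ) * Complex.I) := by
    filter_upwards [hφ α, hφ β] with x hα hβ
    rw [RCLike.inner_apply, hα, hβ, map_mul, map_inv₀, Complex.conj_ofReal,
      ← Complex.exp_conj, map_mul, Complex.conj_ofReal, Complex.conj_I, mul_mul_mul_comm,
      hsqrt, ← Complex.exp_add, inner_sub_left]
    push_cast
    ring_nf
  rw [L2.inner_def, integral_congr_ae hpointwise, integral_const_mul, hK]

theorem kernel_zero_eq_one [IsFiniteMeasure ν] (hν0 : ν Set.univ ≠ 0)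
    (hK : IsMeasurementKernel ν K) : K 0 = 1 := by
  have hm : (ν Set.univ).toReal ≠ 0 := (ENNReal.toReal_pos hν0 (measure_ne_top ν _)).ne'
  have h : (K 0 : ℂ) = 1 := by simp [hK 0, Measure.real, hm]
  exact_mod_cast h

theorem norm_steering_eq_one [IsFiniteMeasure ν] (hν0 : ν Set.univ ≠ 0)
    (hK : IsMeasurementKernel ν K) (hφ : IsSteeringFamily φ) (α : E) : ‖φ α‖ = 1 := by
  have h : ‖φ α‖ ^ 2 = 1 ^ 2 := by
    rw [← inner_self_eq_norm_sq (𝕜 := ℂ), inner_steering_eq hK hφ, sub_self,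
      kernel_zero_eq_one hν0 hK, Complex.ofReal_one, one_pow, RCLike.one_re]
  exact (pow_left_inj₀ (norm_nonneg _) zero_le_one two_ne_zero).mp h

theorem abs_kernel_le_one [IsFiniteMeasure ν] (hν0 : ν Set.univ ≠ 0)
    (hK : IsMeasurementKernel ν K) (hφ : IsSteeringFamily φ) (ξ : E) : |K ξ| ≤ 1 := by
  have h := norm_inner_le_norm (𝕜 := ℂ) (φ 0) (φ ξ)
  rwa [inner_steering_eq hK hφ, sub_zero, Complex.norm_real, Real.norm_eq_abs,
    norm_steering_eq_one hν0 hK hφ, norm_steering_eq_one hν0 hK hφ, one_mul] at h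

end Steering

theorem norm_sub_sq_eq_of_mem_of_sub_mem_orthogonal {𝕜 F : Type*} [RCLike 𝕜]
    [NormedAddCommGroup F] [InnerProductSpace 𝕜 F] {U : Submodule 𝕜 F} {f p : F}
    (hp : p ∈ U) (hfp : f - p ∈ Uᗮ) :
    ‖f - p‖ ^ 2 = ‖f‖ ^ 2 - ‖p‖ ^ 2 := by
  have h := norm_add_sq_eq_norm_sq_add_norm_sq_of_inner_eq_zero p (f - p)
    (Submodule.inner_right_of_mem_orthogonal hp hfp)
  rw [add_sub_cancel] at h
  linarith

theorem exists_real_coeffs_of_mem_span {F ι : Type*} [NormedAddCommGroup F]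
    [InnerProductSpace ℂ F] [Fintype ι] {v : ι → F} {w u : F}
    {G : ι → ι → ℝ} {g : ι → ℝ} (hG : ∀ j k, inner ℂ (v j) (v k) = (G j k : ℂ))
    (hg : ∀ ℓ, inner ℂ (v ℓ) w = (g ℓ : ℂ))
    (hu : u ∈ Submodule.span ℂ (Set.range v))
    (hwu : w - u ∈ (Submodule.span ℂ (Set.range v))ᗮ) :
    ∃ a : ι → ℝ, (∀ ℓ, ∑ k, a k * G ℓ k = g ℓ) ∧ ‖u‖ ^ 2 = ∑ ℓ, a ℓ * g ℓ := by
  have hperp : ∀ x ∈ Submodule.span ℂ (Set.range v), inner ℂ x w = inner ℂ x u := fun x hx =>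
    sub_eq_zero.mp ((inner_sub_right x w u).symm.trans
      (Submodule.inner_right_of_mem_orthogonal hx hwu))
  obtain ⟨c, rfl⟩ := (Submodule.mem_span_range_iff_exists_fun ℂ).mp hu
  refine ⟨fun k => (c k).re, fun ℓ => ?_, ?_⟩
  · have h := congrArg Complex.re (hperp (v ℓ) (Submodule.subset_span ⟨ℓ, rfl⟩))
    simpa [hg, hG, inner_sum, inner_smul_right, Complex.mul_re, mul_comm] using h.symm
  · have h := congrArg RCLike.re (hperp _ hu)
    rw [← inner_self_eq_norm_sq (𝕜 := ℂ), ← h]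
    simp [hg, mul_comm]

section Rayleigh

variable {ι : Type*} [Fintype ι]

def quadForm (G : ι → ι → ℝ) (v : ι → ℝ) : ℝ :=
  ∑ j, ∑ k, v j * G j k * v k

def rayleighValues (G : ι → ι → ℝ) : Set ℝ :=
  {r | ∃ v : ι → ℝ, ∑ i, v i ^ 2 = 1 ∧ r = quadForm G v}

theorem quadForm_smul (G : ι → ι → ℝ) (c : ℝ) (v : ι → ℝ) :
    quadForm G (c • v) = c ^ 2 * quadForm G v := by
  simp only [quadForm, Pi.smul_apply, smul_eq_mul, Finset.mul_sum]
  exact Finset.sum_congr rfl fun j _ => Finset.sum_congr rfl fun k _ => by ring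

theorem quadForm_div_mem_rayleighValues (G : ι → ι → ℝ) {v : ι → ℝ}
    (hv : 0 < ∑ i, v i ^ 2) : quadForm G v / ∑ i, v i ^ 2 ∈ rayleighValues G := by
  set n := ∑ i, v i ^ 2
  refine ⟨(√n)⁻¹ • v, ?_, ?_⟩
  · simp only [Pi.smul_apply, smul_eq_mul, mul_pow, ← Finset.mul_sum, inv_pow,
      Real.sq_sqrt hv.le]
    exact inv_mul_cancel₀ hv.ne'
  · rw [quadForm_smul, inv_pow, Real.sq_sqrt hv.le, inv_mul_eq_div]

theorem quadForm_eq_zero_of_sum_sq_eq_zero (G : ι → ι → ℝ) {v : ι → ℝ}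
    (hv : ∑ i, v i ^ 2 = 0) : quadForm G v = 0 := by
  have hv0 : v = 0 := funext fun i =>
    pow_eq_zero_iff two_ne_zero |>.mp
      ((Finset.sum_eq_zero_iff_of_nonneg fun i _ => sq_nonneg (v i)).mp hv i (Finset.mem_univ i))
  simp [hv0, quadForm]

theorem mul_sum_sq_le_quadForm_of_isLeast {G : ι → ι → ℝ} {l : ℝ}
    (hl : IsLeast (rayleighValues G) l) (v : ι → ℝ) :
    l * ∑ i, v i ^ 2 ≤ quadForm G v := by
  rcases (Finset.sum_nonneg fun i _ => sq_nonneg (v i)).eq_or_lt with hv | hv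
  · rw [← hv, quadForm_eq_zero_of_sum_sq_eq_zero G hv.symm, mul_zero]
  · exact (le_div_iff₀ hv).mp (hl.2 (quadForm_div_mem_rayleighValues G hv))

theorem quadForm_le_mul_sum_sq_of_isGreatest {G : ι → ι → ℝ} {l : ℝ}
    (hl : IsGreatest (rayleighValues G) l) (v : ι → ℝ) :
    quadForm G v ≤ l * ∑ i, v i ^ 2 := by
  rcases (Finset.sum_nonneg fun i _ => sq_nonneg (v i)).eq_or_lt with hv | hv
  · rw [← hv, quadForm_eq_zero_of_sum_sq_eq_zero G hv.symm, mul_zero]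
  · exact (div_le_iff₀ hv).mp (hl.2 (quadForm_div_mem_rayleighValues G hv))

end Rayleigh

theorem le_add_mul_of_rayleigh_bounds {B na nb lmin lmax M : ℝ} (hB0 : 0 ≤ B) (hB1 : B ≤ 1)
    (hnb : 0 ≤ nb) (hCS : B ^ 2 ≤ na * nb) (hmin : lmin * na ≤ B) (hmax : B ≤ lmax * na)
    (hlmin : 0 < lmin) (hlmax : 0 ≤ lmax) (hM0 : 0 ≤ M) (hM : 1 / lmin - 1 ≤ M) :
    B ≤ nb + lmax * M := by
  have hlM : 0 ≤ lmax * M := mul_nonneg hlmax hM0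
  rcases le_or_gt na B with hnaB | hBna
  · have : B ^ 2 ≤ B * nb := hCS.trans (mul_le_mul_of_nonneg_right hnaB hnb)
    nlinarith
  · have hna : 0 < na := hB0.trans_lt hBna
    have hgap : na - B ≤ B * M := by
      have : na ≤ B / lmin := (le_div_iff₀ hlmin).mpr (by linarith)
      rw [div_eq_mul_one_div] at this
      nlinarith
    refine le_of_mul_le_mul_right ?_ hna
    calc B * na = B ^ 2 + B * (na - B) := by ring
      _ ≤ na * nb + B * (B * M) := add_le_add hCS (mul_le_mul_of_nonneg_left hgap hB0)
      _ ≤ na * nb + lmax * na * M := by gcongr; nlinarith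
      _ = (nb + lmax * M) * na := by ring

theorem card_filter_not_half_le_dist_le_one {X ι : Type*} [PseudoMetricSpace X] [Fintype ι]
    {θ : ι → X} {Δ : ℝ} (hΔ : ∀ j k, j ≠ k → Δ ≤ dist (θ j) (θ k)) (ω : X) :
    (Finset.univ.filter fun ℓ => ¬ Δ / 2 ≤ dist ω (θ ℓ)).card ≤ 1 := by
  refine Finset.card_le_one.mpr fun j hj k hk => by_contra fun hjk => ?_
  simp only [Finset.mem_filter, Finset.mem_univ, true_and, not_le] at hj hk
  linarith [hΔ j k hjk, dist_triangle_left (θ j) (θ k) ω]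

section FarField

variable {d s : ℕ} {K : EuclideanSpace ℝ (Fin d) → ℝ} {C : ℝ}

theorem abs_le_kerSupCompl (hK : ∀ ξ, |K ξ| ≤ C) {τ : ℝ} {ξ : EuclideanSpace ℝ (Fin d)}
    (hξ : τ ≤ ‖ξ‖) : |K ξ| ≤ kerSupCompl K τ :=
  le_ciSup (f := fun ξ : {ξ : EuclideanSpace ℝ (Fin d) // τ ≤ ‖ξ‖} => |K ξ.1|)
    ⟨C, by rintro _ ⟨ξ, rfl⟩; exact hK _⟩ ⟨ξ, hξ⟩

theorem sum_filter_sq_le_energy0 (hK : ∀ ξ, |K ξ| ≤ C) (θ : Fin s → EuclideanSpace ℝ (Fin d))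
    (Δ : ℝ) (ω : EuclideanSpace ℝ (Fin d)) :
    ∑ ℓ ∈ Finset.univ.filter (fun ℓ => Δ / 2 ≤ dist ω (θ ℓ)), K (ω - θ ℓ) ^ 2
      ≤ energy0 K θ Δ := by
  refine le_ciSup (f := fun ω => ∑ ℓ ∈ Finset.univ.filter (fun ℓ => Δ / 2 ≤ dist ω (θ ℓ)),
    K (ω - θ ℓ) ^ 2) ⟨∑ _ℓ : Fin s, C ^ 2, ?_⟩ ω
  rintro _ ⟨ω', rfl⟩
  calc ∑ ℓ ∈ Finset.univ.filter (fun ℓ => Δ / 2 ≤ dist ω' (θ ℓ)), K (ω' - θ ℓ) ^ 2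
      ≤ ∑ ℓ, K (ω' - θ ℓ) ^ 2 :=
        Finset.sum_le_sum_of_subset_of_nonneg (Finset.filter_subset _ _)
          fun _ _ _ => sq_nonneg _
    _ ≤ ∑ _ℓ : Fin s, C ^ 2 := Finset.sum_le_sum fun ℓ _ =>
        sq_le_sq' (neg_le_of_abs_le (hK _)) (le_of_abs_le (hK _))

theorem sum_sq_le_kerSupCompl_sq_add_energy0 (hK : ∀ ξ, |K ξ| ≤ C)
    {θ : Fin s → EuclideanSpace ℝ (Fin d)} {Δ : ℝ}
    (hΔ : ∀ j k, j ≠ k → Δ ≤ dist (θ j) (θ k)) {τ : ℝ} {ω : EuclideanSpace ℝ (Fin d)}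
    (hω : ∀ ℓ, τ ≤ dist ω (θ ℓ)) :
    ∑ ℓ, K (ω - θ ℓ) ^ 2 ≤ kerSupCompl K τ ^ 2 + energy0 K θ Δ := by
  have hnear : ∑ ℓ ∈ Finset.univ.filter (fun ℓ => ¬ Δ / 2 ≤ dist ω (θ ℓ)), K (ω - θ ℓ) ^ 2
      ≤ kerSupCompl K τ ^ 2 := by
    refine (Finset.sum_le_card_nsmul _ _ (kerSupCompl K τ ^ 2) fun ℓ _ => ?_).trans ?_
    · have h := abs_le_kerSupCompl hK (dist_eq_norm ω (θ ℓ) ▸ hω ℓ)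
      exact sq_le_sq' (neg_le_of_abs_le h) (le_of_abs_le h)
    · rw [nsmul_eq_mul]
      exact mul_le_of_le_one_left (sq_nonneg _)
        (by exact_mod_cast card_filter_not_half_le_dist_le_one hΔ ω)
  rw [← Finset.sum_filter_add_sum_filter_not _ fun ℓ => Δ / 2 ≤ dist ω (θ ℓ)]
  linarith [sum_filter_sq_le_energy0 hK θ Δ ω]

end FarField

theorem stmt2_general
    {d s : ℕ}
    -- the measure: finite, positive, symmetric, with finite fourth moments
    (ν : Measure (EuclideanSpace ℝ (Fin d))) [IsFiniteMeasure ν]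
    (hν0 : ν Set.univ ≠ 0)
    -- the measurement kernel `K(ξ) = ν(ℝ^d)⁻¹ ∫ e^{2πi ξ·x} dν(x)`:
    -- real-valued, even, C⁴, with vanishing gradient at the origin
    (K : EuclideanSpace ℝ (Fin d) → ℝ)
    (hK : ∀ ξ, (K ξ : ℂ) = (((ν Set.univ).toReal : ℂ))⁻¹ *
      ∫ x, Complex.exp ((2 * Real.pi * (inner ℝ ξ x : ℝ) : ℝ) * Complex.I) ∂ν)
    -- the unit steering vectors `φ_ω(x) = ν(ℝ^d)^{-1/2} e^{2πi ω·x}` in `L²(ν)`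
    (φ : EuclideanSpace ℝ (Fin d) → Lp ℂ 2 ν)
    (hφ : ∀ ω, ⇑(φ ω) =ᵐ[ν] fun x => ((Real.sqrt ((ν Set.univ).toReal) : ℂ))⁻¹ *
      Complex.exp ((2 * Real.pi * (inner ℝ ω x : ℝ) : ℝ) * Complex.I))
    -- the parameters `ϑ` and their minimum separation `Δ`
    (θ : Fin s → EuclideanSpace ℝ (Fin d))
    (Δ : ℝ) (hΔsep : ∀ j k, j ≠ k → Δ ≤ dist (θ j) (θ k))
    -- extreme eigenvalues of the kernel matrix `K_ϑ`, `λ_min(K_ϑ) > 0`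
    (lamKmin lamKmax : ℝ)
    (hlamKmin : IsLeast {r : ℝ | ∃ v : Fin s → ℝ, ∑ i, v i ^ 2 = 1 ∧
      r = ∑ j, ∑ k, v j * K (θ j - θ k) * v k} lamKmin)
    (hlamKmax : IsGreatest {r : ℝ | ∃ v : Fin s → ℝ, ∑ i, v i ^ 2 = 1 ∧
      r = ∑ j, ∑ k, v j * K (θ j - θ k) * v k} lamKmax)
    (hlamKpos : 0 < lamKmin)
    -- the orthogonal projection `P_U` onto `U = span{φ_{θ_1}, …, φ_{θ_s}}`
    (PU : Lp ℂ 2 ν →L[ℂ] Lp ℂ 2 ν)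
    (hPUmem : ∀ f, PU f ∈ Submodule.span ℂ (Set.range fun ℓ => φ (θ ℓ)))
    (hPUorth : ∀ f, f - PU f ∈ (Submodule.span ℂ (Set.range fun ℓ => φ (θ ℓ)))ᗮ)
    -- the scale `τ` and the point `ω` far from the configuration
    (τ : ℝ)
    (ω : EuclideanSpace ℝ (Fin d)) (hω : ∀ ℓ, τ ≤ dist ω (θ ℓ)) :
    1 - kerSupCompl K τ ^ 2 - energy0 K θ Δ
        - lamKmax * max |1 / lamKmax - 1| |1 / lamKmin - 1|
      ≤ musicFun φ PU ω := by
  obtain ⟨a, hgram, hB⟩ := exists_real_coeffs_of_mem_span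
    (G := fun ℓ k => K (θ k - θ ℓ)) (g := fun ℓ => K (ω - θ ℓ))
    (fun _ _ => inner_steering_eq hK hφ _ _) (fun _ => inner_steering_eq hK hφ _ _)
    (hPUmem (φ ω)) (hPUorth (φ ω))
  have hq : musicFun φ PU ω = 1 - ‖PU (φ ω)‖ ^ 2 := by
    rw [musicFun, norm_sub_sq_eq_of_mem_of_sub_mem_orthogonal (hPUmem _) (hPUorth _),
      norm_steering_eq_one hν0 hK hφ, one_pow]
  have hQ : quadForm (fun j k => K (θ j - θ k)) a = ‖PU (φ ω)‖ ^ 2 := by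
    rw [hB, quadForm, Finset.sum_comm]
    refine Finset.sum_congr rfl fun k _ => ?_
    rw [← hgram k, Finset.mul_sum]
    exact Finset.sum_congr rfl fun j _ => by ring
  have hCS : (‖PU (φ ω)‖ ^ 2) ^ 2 ≤ (∑ ℓ, a ℓ ^ 2) * ∑ ℓ, K (ω - θ ℓ) ^ 2 :=
    hB ▸ Finset.sum_mul_sq_le_sq_mul_sq _ _ _
  have hB1 : ‖PU (φ ω)‖ ^ 2 ≤ 1 := by
    linarith [show 0 ≤ musicFun φ PU ω from sq_nonneg _]
  have hkey := le_add_mul_of_rayleigh_bounds (sq_nonneg _) hB1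
    (Finset.sum_nonneg fun ℓ _ => sq_nonneg _) hCS
    (hQ ▸ mul_sum_sq_le_quadForm_of_isLeast hlamKmin a)
    (hQ ▸ quadForm_le_mul_sum_sq_of_isGreatest hlamKmax a) hlamKpos
    (hlamKpos.le.trans (hlamKmax.2 hlamKmin.1)) ((abs_nonneg _).trans (le_max_left _ _))
    ((le_abs_self _).trans (le_max_right |1 / lamKmax - 1| _))
  rw [hq]
  linarith [sum_sq_le_kerSupCompl_sq_add_energy0 (abs_kernel_le_one hν0 hK hφ) hΔsep hω]

/-- **Lower bound for the noiseless MUSIC function away from the parameters.**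
If `λ_min(K_ϑ) > 0`, `0 < τ ≤ Δ/2` and `dist(ω, ϑ) ≥ τ`, then
`q(ω) ≥ 1 - ‖K‖²_{L∞(B_τᶜ)} - E₀(ϑ)
  - λ_max(K_ϑ)·max{|1/λ_max(K_ϑ) - 1|, |1/λ_min(K_ϑ) - 1|}`,
where `q = q_U` is the MUSIC function of `U = span{φ_{θ_ℓ}}` and
`λ_min(K_ϑ), λ_max(K_ϑ)` are characterized as the least and greatest values of
the Rayleigh quotient of the kernel matrix `K_ϑ = [K(θ_j - θ_k)]`. -/
theorem stmt2
    {d s : ℕ} (hd : 1 ≤ d) (hs : 1 ≤ s)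
    -- the measure: finite, positive, symmetric, with finite fourth moments
    (ν : Measure (EuclideanSpace ℝ (Fin d))) [IsFiniteMeasure ν]
    (hν0 : ν Set.univ ≠ 0)
    (hνsym : ν.map (fun x => -x) = ν)
    (hmom : Integrable (fun x => ‖x‖ ^ 4) ν)
    -- the measurement kernel `K(ξ) = ν(ℝ^d)⁻¹ ∫ e^{2πi ξ·x} dν(x)`:
    -- real-valued, even, C⁴, with vanishing gradient at the origin
    (K : EuclideanSpace ℝ (Fin d) → ℝ)
    (hK : ∀ ξ, (K ξ : ℂ) = (((ν Set.univ).toReal : ℂ))⁻¹ *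
      ∫ x, Complex.exp ((2 * Real.pi * (inner ℝ ξ x : ℝ) : ℝ) * Complex.I) ∂ν)
    (hKC4 : ContDiff ℝ 4 K)
    (hKeven : ∀ ξ, K (-ξ) = K ξ)
    (hgradK0 : gradient K 0 = 0)
    -- the unit steering vectors `φ_ω(x) = ν(ℝ^d)^{-1/2} e^{2πi ω·x}` in `L²(ν)`
    (φ : EuclideanSpace ℝ (Fin d) → Lp ℂ 2 ν)
    (hφ : ∀ ω, ⇑(φ ω) =ᵐ[ν] fun x => ((Real.sqrt ((ν Set.univ).toReal) : ℂ))⁻¹ *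
      Complex.exp ((2 * Real.pi * (inner ℝ ω x : ℝ) : ℝ) * Complex.I))
    -- the parameters `ϑ` and their minimum separation `Δ`
    (θ : Fin s → EuclideanSpace ℝ (Fin d)) (hθinj : Function.Injective θ)
    (Δ : ℝ) (hΔsep : ∀ j k, j ≠ k → Δ ≤ dist (θ j) (θ k))
    -- extreme eigenvalues of the kernel matrix `K_ϑ`, `λ_min(K_ϑ) > 0`
    (lamKmin lamKmax : ℝ)
    (hlamKmin : IsLeast {r : ℝ | ∃ v : Fin s → ℝ, ∑ i, v i ^ 2 = 1 ∧
      r = ∑ j, ∑ k, v j * K (θ j - θ k) * v k} lamKmin)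
    (hlamKmax : IsGreatest {r : ℝ | ∃ v : Fin s → ℝ, ∑ i, v i ^ 2 = 1 ∧
      r = ∑ j, ∑ k, v j * K (θ j - θ k) * v k} lamKmax)
    (hlamKpos : 0 < lamKmin)
    -- the orthogonal projection `P_U` onto `U = span{φ_{θ_1}, …, φ_{θ_s}}`
    (PU : Lp ℂ 2 ν →L[ℂ] Lp ℂ 2 ν)
    (hPUmem : ∀ f, PU f ∈ Submodule.span ℂ (Set.range fun ℓ => φ (θ ℓ)))
    (hPUorth : ∀ f, f - PU f ∈ (Submodule.span ℂ (Set.range fun ℓ => φ (θ ℓ)))ᗮ)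
    -- the scale `τ` and the point `ω` far from the configuration
    (τ : ℝ) (hτ0 : 0 < τ) (hτΔ : 2 * τ ≤ Δ)
    (ω : EuclideanSpace ℝ (Fin d)) (hω : ∀ ℓ, τ ≤ dist ω (θ ℓ)) :
    1 - kerSupCompl K τ ^ 2 - energy0 K θ Δ
        - lamKmax * max |1 / lamKmax - 1| |1 / lamKmin - 1|
      ≤ musicFun φ PU ω :=
  stmt2_general ν hν0 K hK φ hφ θ Δ hΔsep lamKmin lamKmax hlamKmin hlamKmax hlamKpos PU hPUmem
    hPUorth τ ω hω

end
end

section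
/- Let r ≥ 1 be an integer and δ > 0, and let Γ ⊂ ℝ^r be a finite set such that |γ − γ'|_∞ ≥ δ for all distinct γ, γ' ∈ Γ and |γ_j| ≥ δ for every γ ∈ Γ and every coordinate j ∈ {1,…,r}. Then Σ_{γ∈Γ} ∏_{j=1}^r γ_j^{−2} ≤ 4^r / δ^{2r}. -/
/-!
Round each coordinate of `γ / δ` toward zero. This gives a nonzero integer vector `m` with
`δ |m_j| ≤ |γ_j|`, and two points of `Γ` with the same `m` would be closer than `δ` in ℓ∞, so the
rounding is injective on `Γ`. Hence the sum is at most
`δ^{-2r} ∑_{m ∈ (ℤ ∖ 0)^r} ∏_j m_j^{-2} = δ^{-2r} (π² / 3)^r ≤ 4^r / δ^{2r}`.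
-/

open Finset Real

section Truncation

variable {R : Type*} [Field R] [LinearOrder R] [IsStrictOrderedRing R]

lemma one_le_abs_div_of_le_abs {δ x : R} (hδ : 0 < δ) (hx : δ ≤ |x|) : 1 ≤ |x / δ| := by
  rwa [abs_div, abs_of_pos hδ, one_le_div hδ]

variable [FloorRing R]

def truncTowardZero (t : R) : ℤ := if 0 ≤ t then ⌊t⌋ else -⌊-t⌋

lemma one_le_floor_neg_of_neg {t : R} (ht : 1 ≤ |t|) (hneg : t < 0) : 1 ≤ ⌊-t⌋ :=
  Int.le_floor.mpr (by rw [abs_of_neg hneg] at ht; exact_mod_cast ht)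

lemma abs_sub_lt_one_of_truncTowardZero_eq {s t : R} (hs : 1 ≤ |s|) (ht : 1 ≤ |t|)
    (h : truncTowardZero s = truncTowardZero t) : |s - t| < 1 := by
  unfold truncTowardZero at h
  split_ifs at h with hs0 ht0 ht0
  · exact Int.abs_sub_lt_one_of_floor_eq_floor h
  · have := one_le_floor_neg_of_neg ht (not_le.mp ht0)
    have := Int.floor_nonneg.mpr hs0
    omega
  · have := one_le_floor_neg_of_neg hs (not_le.mp hs0)
    have := Int.floor_nonneg.mpr ht0
    omega
  · have := Int.abs_sub_lt_one_of_floor_eq_floor (neg_injective h)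
    rwa [neg_sub_neg, abs_sub_comm] at this

lemma abs_truncTowardZero_le (t : R) : |(truncTowardZero t : R)| ≤ |t| := by
  unfold truncTowardZero
  split_ifs with ht
  · rw [abs_of_nonneg ht, abs_of_nonneg (by exact_mod_cast Int.floor_nonneg.mpr ht)]
    exact Int.floor_le t
  · rw [abs_of_neg (not_le.mp ht), Int.cast_neg, abs_neg,
      abs_of_nonneg (by exact_mod_cast Int.floor_nonneg.mpr (neg_nonneg.mpr (not_le.mp ht).le))]
    exact Int.floor_le (-t)

lemma one_le_abs_truncTowardZero {t : R} (ht : 1 ≤ |t|) : 1 ≤ |(truncTowardZero t : R)| := by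
  unfold truncTowardZero
  split_ifs with h0
  · rw [abs_of_nonneg h0] at ht
    exact le_abs.mpr (Or.inl (by exact_mod_cast Int.le_floor.mpr (by exact_mod_cast ht)))
  · rw [Int.cast_neg, abs_neg]
    exact le_abs.mpr (Or.inl (by exact_mod_cast one_le_floor_neg_of_neg ht (not_le.mp h0)))

lemma inv_sq_le_inv_sq_mul_inv_sq_truncTowardZero {δ x : R} (hδ : 0 < δ) (hx : δ ≤ |x|) :
    (x ^ 2)⁻¹ ≤ (δ ^ 2)⁻¹ * ((truncTowardZero (x / δ) : R) ^ 2)⁻¹ := by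
  set m : R := ((truncTowardZero (x / δ) : ℤ) : R)
  have hm : 1 ≤ |m| := one_le_abs_truncTowardZero (one_le_abs_div_of_le_abs hδ hx)
  have hδm : |δ * m| ≤ |x| := by
    rw [abs_mul, abs_of_pos hδ, ← le_div_iff₀' hδ, ← abs_of_pos hδ, ← abs_div]
    exact abs_truncTowardZero_le _
  have hδm0 : δ * m ≠ 0 := mul_ne_zero hδ.ne' (abs_pos.mp (one_pos.trans_le hm))
  calc (x ^ 2)⁻¹ ≤ ((δ * m) ^ 2)⁻¹ := inv_anti₀ (by positivity) (sq_le_sq.mpr hδm)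
    _ = (δ ^ 2)⁻¹ * (m ^ 2)⁻¹ := by rw [mul_pow, mul_inv]

lemma abs_sub_lt_of_truncTowardZero_div_eq {δ x y : R} (hδ : 0 < δ) (hx : δ ≤ |x|)
    (hy : δ ≤ |y|) (h : truncTowardZero (x / δ) = truncTowardZero (y / δ)) : |x - y| < δ := by
  have := abs_sub_lt_one_of_truncTowardZero_eq (one_le_abs_div_of_le_abs hδ hx)
    (one_le_abs_div_of_le_abs hδ hy) h
  rwa [← sub_div, abs_div, abs_of_pos hδ, div_lt_one hδ] at this

end Truncation

lemma Finset.sum_prod_le_pow_of_forall_sum_le {ι α R : Type*} [Fintype ι] [CommSemiring R]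
    [PartialOrder R] [IsOrderedRing R] {f : α → R} (hf : ∀ a, 0 ≤ f a) {C : R}
    (hC : ∀ s : Finset α, ∑ a ∈ s, f a ≤ C) (A : Finset (ι → α)) :
    ∑ x ∈ A, ∏ i, f (x i) ≤ C ^ Fintype.card ι := by
  classical
  have hA : A ⊆ Fintype.piFinset fun i => A.image (· i) := fun x hx =>
    Fintype.mem_piFinset.mpr fun i => mem_image_of_mem _ hx
  calc ∑ x ∈ A, ∏ i, f (x i)
      ≤ ∑ x ∈ Fintype.piFinset (fun i => A.image (· i)), ∏ i, f (x i) :=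
        sum_le_sum_of_subset_of_nonneg hA fun x _ _ => prod_nonneg fun i _ => hf _
    _ = ∏ i, ∑ a ∈ A.image (· i), f a := (prod_univ_sum _ fun _ => f).symm
    _ ≤ ∏ _i : ι, C := prod_le_prod (fun i _ => sum_nonneg fun a _ => hf a) fun i _ => hC _
    _ = C ^ Fintype.card ι := by rw [prod_const, card_univ]

-- The `m = 0` term is the junk value `0⁻¹ = 0`.
lemma hasSum_int_inv_sq : HasSum (fun m : ℤ => ((m : ℝ) ^ 2)⁻¹) (π ^ 2 / 3) := by
  have hnat : HasSum (fun n : ℕ => ((n : ℝ) ^ 2)⁻¹) (π ^ 2 / 6) := by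
    simpa only [one_div] using hasSum_zeta_two
  have hsum : π ^ 2 / 3 = π ^ 2 / 6 + π ^ 2 / 6 - (((0 : ℤ) : ℝ) ^ 2)⁻¹ := by norm_num; ring
  rw [hsum]
  exact .of_nat_of_neg (by simpa using hnat) (by simpa using hnat)

lemma sum_int_inv_sq_le_four (s : Finset ℤ) : ∑ m ∈ s, ((m : ℝ) ^ 2)⁻¹ ≤ 4 :=
  calc ∑ m ∈ s, ((m : ℝ) ^ 2)⁻¹ ≤ π ^ 2 / 3 :=
        sum_le_hasSum s (fun _ _ => by positivity) hasSum_int_inv_sq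
    _ ≤ 4 := by nlinarith [pi_lt_d2, pi_pos]

theorem sum_prod_inv_sq_le_of_pairwise_le_dist {ι : Type*} [Fintype ι] {δ : ℝ} (hδ : 0 < δ)
    {Γ : Finset (ι → ℝ)} (hsep : (Γ : Set (ι → ℝ)).Pairwise fun γ γ' => δ ≤ dist γ γ')
    (hcoord : ∀ γ ∈ Γ, ∀ j, δ ≤ |γ j|) :
    ∑ γ ∈ Γ, ∏ j, (γ j ^ 2)⁻¹ ≤ (4 / δ ^ 2) ^ Fintype.card ι := by
  classical
  set K : (ι → ℝ) → ι → ℤ := fun γ j => truncTowardZero (γ j / δ)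
  have hK : Set.InjOn K Γ := by
    intro γ hγ γ' hγ' hKγ
    by_contra hne
    refine (hsep hγ hγ' hne).not_gt ((dist_pi_lt_iff hδ).mpr fun j => ?_)
    rw [Real.dist_eq]
    exact abs_sub_lt_of_truncTowardZero_div_eq hδ (hcoord γ hγ j) (hcoord γ' hγ' j)
      (congrFun hKγ j)
  calc ∑ γ ∈ Γ, ∏ j, (γ j ^ 2)⁻¹
      ≤ ∑ γ ∈ Γ, ∏ j, (δ ^ 2)⁻¹ * ((K γ j : ℝ) ^ 2)⁻¹ :=
        sum_le_sum fun γ hγ => prod_le_prod (fun j _ => by positivity) fun j _ =>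
          inv_sq_le_inv_sq_mul_inv_sq_truncTowardZero hδ (hcoord γ hγ j)
    _ = ((δ ^ 2)⁻¹) ^ Fintype.card ι * ∑ m ∈ Γ.image K, ∏ j, ((m j : ℝ) ^ 2)⁻¹ := by
        rw [sum_image hK, mul_sum]
        simp only [prod_mul_distrib, prod_const, card_univ]
    _ ≤ ((δ ^ 2)⁻¹) ^ Fintype.card ι * 4 ^ Fintype.card ι := by
        gcongr
        exact sum_prod_le_pow_of_forall_sum_le (fun m => by positivity) sum_int_inv_sq_le_four _
    _ = (4 / δ ^ 2) ^ Fintype.card ι := by rw [← mul_pow, inv_mul_eq_div]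

theorem stmt11_general (r : ℕ) (δ : ℝ) (hδ : 0 < δ)
    (Γ : Finset (Fin r → ℝ))
    (hsep : ∀ γ ∈ Γ, ∀ γ' ∈ Γ, γ ≠ γ' → δ ≤ ⨆ j, |γ j - γ' j|)
    (hcoord : ∀ γ ∈ Γ, ∀ j, δ ≤ |γ j|) :
    ∑ γ ∈ Γ, ∏ j, (γ j ^ 2)⁻¹ ≤ 4 ^ r / δ ^ (2 * r) := by
  have hsep_dist : (Γ : Set (Fin r → ℝ)).Pairwise fun γ γ' => δ ≤ dist γ γ' :=
    fun γ hγ γ' hγ' hne => (hsep γ hγ γ' hγ' hne).trans <|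
      Real.iSup_le (fun j => (Real.dist_eq _ _).symm.trans_le (dist_le_pi_dist γ γ' j))
        dist_nonneg
  calc ∑ γ ∈ Γ, ∏ j, (γ j ^ 2)⁻¹ ≤ (4 / δ ^ 2) ^ Fintype.card (Fin r) :=
        sum_prod_inv_sq_le_of_pairwise_le_dist hδ hsep_dist hcoord
    _ = 4 ^ r / δ ^ (2 * r) := by rw [Fintype.card_fin, div_pow, pow_mul]

/-- **Box-packing bound.**
If `Γ ⊂ ℝ^r` is finite with pairwise ℓ∞ separation at least `δ` and every
coordinate of every point of `Γ` is at least `δ` in absolute value, then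
`∑_{γ∈Γ} ∏_j γ_j⁻² ≤ 4^r/δ^{2r}`. -/
theorem stmt11 (r : ℕ) (hr : 1 ≤ r) (δ : ℝ) (hδ : 0 < δ)
    (Γ : Finset (Fin r → ℝ))
    (hsep : ∀ γ ∈ Γ, ∀ γ' ∈ Γ, γ ≠ γ' → δ ≤ ⨆ j, |γ j - γ' j|)
    (hcoord : ∀ γ ∈ Γ, ∀ j, δ ≤ |γ j|) :
    ∑ γ ∈ Γ, ∏ j, (γ j ^ 2)⁻¹ ≤ 4 ^ r / δ ^ (2 * r) :=
  stmt11_general r δ hδ Γ hsep hcoord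
end

section
/- Fix d ≥ 1. There exist constants c > 0 and c' > 0 depending only on d with the following property. Let s ≥ 2, β ≥ 1, let m ≥ 2βs, let p ∈ [1,∞], and let 0 < ε ≤ c'·m^{d/p} (with the convention d/p = 0 when p = ∞). Let X_⋆ := B_{2m} ⊂ ℝ^d be the closed Euclidean ball of radius 2m centered at the origin. Then for every function ψ : (X_⋆ → ℂ) → (ℝ^d)^s there exist distinct θ_1,…,θ_s ∈ [0,1]^d with m·min_{j≠k}|θ_j − θ_k| ≥ β, amplitudes a_1,…,a_s ∈ ℂ with min_ℓ |a_ℓ| = 1, and a measurable η : X_⋆ → ℂ with ‖η‖_{L^p(B_{2m})} ≤ ε, such that the matching distance between ϑ = (θ_1,…,θ_s) and ψ(ỹ) is at least c·ε/m^{1+d/p}, where ỹ : X_⋆ → ℂ is given by ỹ(x) := Σ_{ℓ=1}^s a_ℓ e^{2πi θ_ℓ·x} + η(x). -/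
/-!
Le Cam's two-point method. Put the `s` frequencies on a coordinate axis at `2βj/m`, and compare
this configuration with the one in which the frequency at the origin is moved to `t`. The two
exponential sums differ by `1 - e^{2πi t x₁}`, of modulus at most `4π m t` on `B_{2m}`, hence of
`L^p(B_{2m})`-norm `≲ t m^{1+d/p}`. For `t ≍ ε/m^{1+d/p}` this difference is admissible noise, so
the noisy data of the shifted configuration equal the clean data of the other one. The two
configurations are at matching distance at least `t`, so every estimator errs by `t/2` on one of
them.
-/

noncomputable section

open MeasureTheory Real
open scoped ENNReal

def matchDist {d s : ℕ} (f g : Fin s → EuclideanSpace ℝ (Fin d)) : ℝ :=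
  ⨅ perm : Equiv.Perm (Fin s), ⨆ ℓ, dist (f ℓ) (g (perm ℓ))

open Metric Module

section MatchDist

variable {d s : ℕ}

lemma matchDist_nonneg (f g : Fin s → EuclideanSpace ℝ (Fin d)) : 0 ≤ matchDist f g :=
  Real.iInf_nonneg fun _ => Real.iSup_nonneg fun _ => dist_nonneg

lemma exists_perm_matchDist_eq (f g : Fin s → EuclideanSpace ℝ (Fin d)) :
    ∃ σ : Equiv.Perm (Fin s), matchDist f g = ⨆ ℓ, dist (f ℓ) (g (σ ℓ)) := by
  obtain ⟨σ, hσ⟩ := Finite.exists_min fun σ : Equiv.Perm (Fin s) => ⨆ ℓ, dist (f ℓ) (g (σ ℓ))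
  exact ⟨σ, le_antisymm (ciInf_le (Finite.bddBelow_range _) σ) (le_ciInf hσ)⟩

lemma matchDist_le (f g : Fin s → EuclideanSpace ℝ (Fin d)) (σ : Equiv.Perm (Fin s)) :
    matchDist f g ≤ ⨆ ℓ, dist (f ℓ) (g (σ ℓ)) :=
  ciInf_le (Finite.bddBelow_range _) σ

lemma dist_le_matchDist_of_eq {f g : Fin s → EuclideanSpace ℝ (Fin d)} {σ : Equiv.Perm (Fin s)}
    (hσ : matchDist f g = ⨆ ℓ, dist (f ℓ) (g (σ ℓ))) (ℓ : Fin s) :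
    dist (f ℓ) (g (σ ℓ)) ≤ matchDist f g :=
  hσ ▸ le_ciSup (Finite.bddAbove_range fun ℓ => dist (f ℓ) (g (σ ℓ))) ℓ

lemma matchDist_comm (f g : Fin s → EuclideanSpace ℝ (Fin d)) :
    matchDist f g = matchDist g f := by
  unfold matchDist
  rw [← (Equiv.inv (Equiv.Perm (Fin s))).iInf_comp]
  refine iInf_congr fun σ => ?_
  rw [← σ.iSup_comp]
  simp [dist_comm]

lemma matchDist_triangle (f g h : Fin s → EuclideanSpace ℝ (Fin d)) :
    matchDist f h ≤ matchDist f g + matchDist g h := by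
  obtain ⟨σ, hσ⟩ := exists_perm_matchDist_eq f g
  obtain ⟨τ, hτ⟩ := exists_perm_matchDist_eq g h
  refine (matchDist_le f h (σ.trans τ)).trans <|
    Real.iSup_le (fun ℓ => ?_) (add_nonneg (matchDist_nonneg f g) (matchDist_nonneg g h))
  exact (dist_triangle _ (g (σ ℓ)) _).trans
    (add_le_add (dist_le_matchDist_of_eq hσ ℓ) (dist_le_matchDist_of_eq hτ (σ ℓ)))

lemma le_matchDist_of_forall_le_dist {f g : Fin s → EuclideanSpace ℝ (Fin d)} {r : ℝ} (i : Fin s)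
    (h : ∀ k, r ≤ dist (f i) (g k)) : r ≤ matchDist f g :=
  le_ciInf fun σ =>
    (h (σ i)).trans (le_ciSup (Finite.bddAbove_range fun ℓ => dist (f ℓ) (g (σ ℓ))) i)

lemma half_matchDist_le_or (f g h : Fin s → EuclideanSpace ℝ (Fin d)) :
    matchDist f g / 2 ≤ matchDist f h ∨ matchDist f g / 2 ≤ matchDist g h := by
  have := (matchDist_triangle f h g).trans_eq (congrArg _ (matchDist_comm h g))
  by_contra! hlt
  linarith [hlt.1, hlt.2]

end MatchDist

lemma norm_exp_ofReal_mul_I_sub_exp_ofReal_mul_I_le (x y : ℝ) :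
    ‖Complex.exp (x * Complex.I) - Complex.exp (y * Complex.I)‖ ≤ |x - y| := by
  have h : Complex.exp (x * Complex.I) - Complex.exp (y * Complex.I) =
      Complex.exp (y * Complex.I) * (Complex.exp (Complex.I * ↑(x - y)) - 1) := by
    rw [mul_sub, ← Complex.exp_add, mul_one]
    push_cast
    ring_nf
  rw [h, norm_mul, Complex.norm_exp_ofReal_mul_I, one_mul, ← Real.norm_eq_abs]
  exact Real.norm_exp_I_mul_ofReal_sub_one_le

section ExpSum

variable {E ι : Type*} [NormedAddCommGroup E] [InnerProductSpace ℝ E] [Fintype ι]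

def expSum (a : ι → ℂ) (θ : ι → E) (x : E) : ℂ :=
  ∑ ℓ, a ℓ * Complex.exp ((2 * π * inner ℝ (θ ℓ) x : ℝ) * Complex.I)

lemma continuous_expSum (a : ι → ℂ) (θ : ι → E) : Continuous (expSum a θ) := by
  unfold expSum
  fun_prop

lemma norm_expSum_sub_expSum_le (a : ι → ℂ) (θ θ' : ι → E) (x : E) :
    ‖expSum a θ x - expSum a θ' x‖ ≤ 2 * π * ‖x‖ * ∑ ℓ, ‖a ℓ‖ * dist (θ ℓ) (θ' ℓ) := by
  rw [expSum, expSum, ← Finset.sum_sub_distrib, Finset.mul_sum]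
  refine (norm_sum_le _ _).trans (Finset.sum_le_sum fun ℓ _ => ?_)
  have hphase : |2 * π * inner ℝ (θ ℓ) x - 2 * π * inner ℝ (θ' ℓ) x| ≤
      2 * π * ‖x‖ * dist (θ ℓ) (θ' ℓ) := by
    have := abs_real_inner_le_norm (θ ℓ - θ' ℓ) x
    rw [← mul_sub, ← inner_sub_left, abs_mul, abs_of_pos two_pi_pos, dist_eq_norm]
    nlinarith [pi_pos]
  calc ‖a ℓ * Complex.exp ((2 * π * inner ℝ (θ ℓ) x : ℝ) * Complex.I) -
        a ℓ * Complex.exp ((2 * π * inner ℝ (θ' ℓ) x : ℝ) * Complex.I)‖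
      = ‖a ℓ‖ * ‖Complex.exp ((2 * π * inner ℝ (θ ℓ) x : ℝ) * Complex.I) -
          Complex.exp ((2 * π * inner ℝ (θ' ℓ) x : ℝ) * Complex.I)‖ := by
        rw [← mul_sub, norm_mul]
    _ ≤ ‖a ℓ‖ * (2 * π * ‖x‖ * dist (θ ℓ) (θ' ℓ)) := by
        gcongr
        exact (norm_exp_ofReal_mul_I_sub_exp_ofReal_mul_I_le _ _).trans hphase
    _ = 2 * π * ‖x‖ * (‖a ℓ‖ * dist (θ ℓ) (θ' ℓ)) := by ring

end ExpSum

lemma inv_toReal_le_one {p : ℝ≥0∞} (hp : 1 ≤ p) : p.toReal⁻¹ ≤ 1 := by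
  rcases eq_or_ne p ⊤ with rfl | hp_top
  · simp
  · exact inv_le_one_of_one_le₀ (by simpa using ENNReal.toReal_mono hp_top hp)

lemma rpow_inv_toReal_le_max_one {V : ℝ} (hV : 0 ≤ V) {p : ℝ≥0∞} (hp : 1 ≤ p) :
    V ^ p.toReal⁻¹ ≤ max V 1 :=
  calc V ^ p.toReal⁻¹ ≤ max V 1 ^ p.toReal⁻¹ := by gcongr; exact le_max_left _ _
    _ ≤ max V 1 ^ (1 : ℝ) :=
      Real.rpow_le_rpow_of_exponent_le (le_max_right _ _) (inv_toReal_le_one hp)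
    _ = max V 1 := Real.rpow_one _

lemma rpow_div_toReal_le_pow {a : ℝ} (ha : 1 ≤ a) (n : ℕ) {p : ℝ≥0∞} (hp : 1 ≤ p) :
    a ^ ((n : ℝ) / p.toReal) ≤ a ^ n := by
  rw [← Real.rpow_natCast a n, div_eq_mul_inv]
  exact Real.rpow_le_rpow_of_exponent_le ha
    (mul_le_of_le_one_right n.cast_nonneg (inv_toReal_le_one hp))

lemma eLpNorm_restrict_closedBall_le {E F : Type*} [NormedAddCommGroup E] [NormedSpace ℝ E]
    [FiniteDimensional ℝ E] [MeasurableSpace E] [BorelSpace E] (μ : Measure E)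
    [μ.IsAddHaarMeasure] [NormedAddCommGroup F] {f : E → F} {p : ℝ≥0∞} (hp : 1 ≤ p) {x : E}
    {R C : ℝ} (hR : 0 ≤ R) (hf : ∀ y ∈ closedBall x R, ‖f y‖ ≤ C) :
    eLpNorm f p (μ.restrict (closedBall x R)) ≤
      ENNReal.ofReal (max (μ (ball 0 1)).toReal 1 * R ^ (finrank ℝ E / p.toReal) * C) := by
  have hC : 0 ≤ C := (norm_nonneg _).trans (hf x (mem_closedBall_self hR))
  obtain ⟨V, hV, hball⟩ : ∃ V, 0 ≤ V ∧ μ (ball 0 1) = ENNReal.ofReal V :=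
    ⟨_, ENNReal.toReal_nonneg, (ENNReal.ofReal_toReal measure_ball_lt_top.ne).symm⟩
  refine (eLpNorm_le_of_ae_bound ((ae_restrict_iff' measurableSet_closedBall).mpr
    (ae_of_all _ hf))).trans ?_
  rw [Measure.restrict_apply_univ, Measure.addHaar_closedBall μ x hR, hball,
    ENNReal.toReal_ofReal hV, ← ENNReal.ofReal_mul (by positivity),
    ENNReal.ofReal_rpow_of_nonneg (by positivity) (by positivity),
    ← ENNReal.ofReal_mul (by positivity),
    Real.mul_rpow (by positivity) hV, ← Real.rpow_natCast, ← Real.rpow_mul hR, ← div_eq_mul_inv,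
    mul_comm (R ^ _)]
  gcongr
  exact rpow_inv_toReal_le_max_one hV hp

section AxisConfig

variable {β m t : ℝ}

def axisCoord (β m t : ℝ) (j : ℕ) : ℝ := if j = 0 then t else 2 * β * j / m

lemma le_axisCoord (hβ : 0 ≤ β) (hm : 0 < m) (ht : t ≤ β / m) (j : ℕ) : t ≤ axisCoord β m t j := by
  unfold axisCoord
  split_ifs with hj
  · exact le_rfl
  · have : (1 : ℝ) ≤ j := by exact_mod_cast Nat.one_le_iff_ne_zero.mpr hj
    refine ht.trans (div_le_div_of_nonneg_right ?_ hm.le)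
    nlinarith

lemma axisCoord_le_one {s j : ℕ} (hβ : 0 ≤ β) (hm : 2 * β * s ≤ m) (ht : t ≤ 1) (hj : j < s) :
    axisCoord β m t j ≤ 1 := by
  unfold axisCoord
  split_ifs
  · exact ht
  · have : (j : ℝ) + 1 ≤ s := by exact_mod_cast hj
    exact div_le_one_of_le₀ (by nlinarith) (by nlinarith)

lemma le_mul_abs_axisCoord_sub (hβ : 0 ≤ β) (hm : 0 < m) (ht : t ≤ β / m) {j k : ℕ}
    (hjk : j ≠ k) : β ≤ m * |axisCoord β m t j - axisCoord β m t k| := by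
  have hmt : m * t ≤ β := by rwa [le_div_iff₀' hm] at ht
  have of_lt : ∀ {j k : ℕ}, j < k → β ≤ m * (axisCoord β m t k - axisCoord β m t j) := by
    intro j k hjk
    have hk : (j : ℝ) + 1 ≤ k := by exact_mod_cast hjk
    have hk0 : k ≠ 0 := by omega
    simp only [axisCoord, hk0, if_false]
    split_ifs with hj
    · rw [mul_sub, mul_div_cancel₀ _ hm.ne']
      nlinarith
    · rw [mul_sub, mul_div_cancel₀ _ hm.ne', mul_div_cancel₀ _ hm.ne']
      nlinarith
  rcases hjk.lt_or_gt with h | h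
  · exact (of_lt h).trans (by rw [abs_sub_comm]; gcongr; exact le_abs_self _)
  · exact (of_lt h).trans (by gcongr; exact le_abs_self _)

variable {d s : ℕ}

def axisConfig (i : Fin d) (β m t : ℝ) (j : Fin s) : EuclideanSpace ℝ (Fin d) :=
  axisCoord β m t j • EuclideanSpace.single i 1

lemma dist_smul_single_one (i : Fin d) (a b : ℝ) :
    dist (a • EuclideanSpace.single i (1 : ℝ)) (b • EuclideanSpace.single i 1) = |a - b| := by
  rw [dist_eq_norm, ← sub_smul, norm_smul, PiLp.norm_single, norm_one, mul_one,
    Real.norm_eq_abs]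

lemma axisConfig_apply_mem_Icc (i : Fin d) (hβ : 0 ≤ β) (hm₀ : 0 < m) (hm : 2 * β * s ≤ m)
    (ht₀ : 0 ≤ t) (ht : t ≤ β / m) (j : Fin s) (k : Fin d) :
    axisConfig i β m t j k ∈ Set.Icc (0 : ℝ) 1 := by
  have hs : (1 : ℝ) ≤ s := by exact_mod_cast j.pos
  have ht₁ : t ≤ 1 := ht.trans (div_le_one_of_le₀ (by nlinarith) hm₀.le)
  have hcoord : axisCoord β m t j ∈ Set.Icc (0 : ℝ) 1 :=
    ⟨ht₀.trans (le_axisCoord hβ hm₀ ht j), axisCoord_le_one hβ hm ht₁ j.isLt⟩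
  rw [axisConfig, PiLp.smul_apply, PiLp.single_apply]
  split_ifs
  · simpa using hcoord
  · simp

lemma le_mul_dist_axisConfig (i : Fin d) (hβ : 0 ≤ β) (hm : 0 < m) (ht : t ≤ β / m) {j k : Fin s}
    (hjk : j ≠ k) : β ≤ m * dist (axisConfig i β m t j) (axisConfig i β m t k) := by
  rw [axisConfig, axisConfig, dist_smul_single_one]
  exact le_mul_abs_axisCoord_sub hβ hm ht (Fin.val_injective.ne hjk)

lemma le_matchDist_axisConfig (i : Fin d) (hs : 0 < s) (hβ : 0 ≤ β) (hm : 0 < m) (ht : t ≤ β / m) :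
    t ≤ matchDist (axisConfig i β m 0) (axisConfig i β m t : Fin s → _) := by
  refine le_matchDist_of_forall_le_dist ⟨0, hs⟩ fun k => ?_
  rw [axisConfig, axisConfig, dist_smul_single_one]
  simp only [axisCoord, if_true, zero_sub, abs_neg]
  exact (le_axisCoord hβ hm ht k).trans (le_abs_self _)

lemma sum_dist_axisConfig (i : Fin d) (hs : 0 < s) (β m t : ℝ) :
    ∑ j : Fin s, dist (axisConfig i β m 0 j) (axisConfig i β m t j) = |t| := by
  rw [Fintype.sum_eq_single ⟨0, hs⟩ fun j hj => ?_]
  · rw [axisConfig, axisConfig, dist_smul_single_one]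
    simp [axisCoord]
  · have : (j : ℕ) ≠ 0 := fun h => hj (Fin.ext h)
    simp [axisConfig, axisCoord, this]

lemma eLpNorm_expSum_axisConfig_sub_le (i : Fin d) (hs : 0 < s) (ht : 0 ≤ t) {p : ℝ≥0∞}
    (hp : 1 ≤ p) {R : ℝ} (hR : 0 ≤ R) :
    eLpNorm (fun x => expSum 1 (axisConfig i β m 0 : Fin s → _) x -
        expSum 1 (axisConfig i β m t : Fin s → _) x)
        p (volume.restrict (closedBall 0 R)) ≤
      ENNReal.ofReal (max (volume (ball (0 : EuclideanSpace ℝ (Fin d)) 1)).toReal 1 *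
        R ^ ((d : ℝ) / p.toReal) * (2 * π * R * t)) := by
  have hbound : ∀ y ∈ closedBall (0 : EuclideanSpace ℝ (Fin d)) R,
      ‖expSum 1 (axisConfig i β m 0 : Fin s → _) y - expSum 1 (axisConfig i β m t) y‖ ≤
        2 * π * R * t := fun y hy =>
    calc _ ≤ 2 * π * ‖y‖ * ∑ j, ‖(1 : Fin s → ℂ) j‖ *
            dist (axisConfig i β m 0 j) (axisConfig i β m t j) :=
          norm_expSum_sub_expSum_le _ _ _ _
      _ = 2 * π * ‖y‖ * t := by simp [sum_dist_axisConfig i hs, abs_of_nonneg ht]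
      _ ≤ 2 * π * R * t := by gcongr; simpa using hy
  simpa only [finrank_euclideanSpace_fin] using
    eLpNorm_restrict_closedBall_le volume hp hR hbound

theorem exists_config_noise_half_le_matchDist (i : Fin d) (hs : 0 < s) (hβ : 0 ≤ β) (hm₀ : 0 < m)
    (hm : 2 * β * s ≤ m) (ht₀ : 0 ≤ t) (ht : t ≤ β / m) {p : ℝ≥0∞} (hp : 1 ≤ p) {R : ℝ}
    (hR : 0 ≤ R) (ψ : (closedBall (0 : EuclideanSpace ℝ (Fin d)) R → ℂ) →
      Fin s → EuclideanSpace ℝ (Fin d)) :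
    ∃ θ : Fin s → EuclideanSpace ℝ (Fin d), ∃ η : EuclideanSpace ℝ (Fin d) → ℂ,
      (∀ ℓ k, θ ℓ k ∈ Set.Icc (0 : ℝ) 1) ∧ (∀ j k, j ≠ k → β ≤ m * dist (θ j) (θ k)) ∧
      Measurable η ∧
      eLpNorm η p (volume.restrict (closedBall 0 R)) ≤
        ENNReal.ofReal (max (volume (ball (0 : EuclideanSpace ℝ (Fin d)) 1)).toReal 1 *
          R ^ ((d : ℝ) / p.toReal) * (2 * π * R * t)) ∧
      t / 2 ≤ matchDist θ (ψ fun x => expSum 1 θ x + η x) := by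
  set θ₀ : Fin s → EuclideanSpace ℝ (Fin d) := axisConfig i β m 0
  set θ : Fin s → EuclideanSpace ℝ (Fin d) := axisConfig i β m t
  have hsep : t / 2 ≤ matchDist θ₀ θ / 2 := by
    gcongr
    exact le_matchDist_axisConfig i hs hβ hm₀ ht
  rcases half_matchDist_le_or θ₀ θ (ψ fun x => expSum 1 θ₀ x) with h | h
  · refine ⟨θ₀, 0, axisConfig_apply_mem_Icc i hβ hm₀ hm le_rfl (by positivity),
      fun j k => le_mul_dist_axisConfig i hβ hm₀ (by positivity), measurable_const,
      by simp [ENNReal.ofReal], ?_⟩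
    simpa only [Pi.zero_apply, add_zero] using hsep.trans h
  · refine ⟨θ, fun x => expSum 1 θ₀ x - expSum 1 θ x, axisConfig_apply_mem_Icc i hβ hm₀ hm ht₀ ht,
      fun j k => le_mul_dist_axisConfig i hβ hm₀ ht,
      ((continuous_expSum _ _).sub (continuous_expSum _ _)).measurable,
      eLpNorm_expSum_axisConfig_sub_le i hs ht₀ hp hR, ?_⟩
    simpa only [add_sub_cancel] using hsep.trans h

end AxisConfig

/-- **Minimax lower bound for spectral estimation on the ball.**
For every estimator `ψ` mapping data on `X_⋆ = B_{2m} ⊂ ℝ^d` to `s` points of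
`ℝ^d`, there is a `β/m`-separated configuration `θ ⊂ [0,1]^d`, amplitudes `a`
with `min |a_ℓ| = 1`, and measurable noise `η` with `‖η‖_{L^p(B_{2m})} ≤ ε`,
such that `ψ` applied to the noisy data `ỹ` errs by at least `c·ε/m^{1+d/p}`
in matching distance. -/
theorem stmt19 (d : ℕ) (hd : 1 ≤ d) :
    ∃ c > (0 : ℝ), ∃ c' > (0 : ℝ),
      ∀ s : ℕ, 2 ≤ s → ∀ β : ℝ, 1 ≤ β → ∀ m : ℝ, 2 * β * s ≤ m →
      ∀ p : ℝ≥0∞, 1 ≤ p →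
      ∀ ε : ℝ, 0 < ε → ε ≤ c' * m ^ ((d : ℝ) / p.toReal) →
      ∀ ψ : (↥(Metric.closedBall (0 : EuclideanSpace ℝ (Fin d)) (2 * m)) → ℂ) →
              (Fin s → EuclideanSpace ℝ (Fin d)),
        ∃ θ : Fin s → EuclideanSpace ℝ (Fin d), ∃ a : Fin s → ℂ,
        ∃ η : EuclideanSpace ℝ (Fin d) → ℂ,
          (∀ ℓ i, θ ℓ i ∈ Set.Icc (0 : ℝ) 1) ∧
          (∀ j k, j ≠ k → β ≤ m * dist (θ j) (θ k)) ∧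
          (∀ ℓ, 1 ≤ ‖a ℓ‖) ∧ (∃ ℓ, ‖a ℓ‖ = 1) ∧
          Measurable η ∧
          eLpNorm η p (volume.restrict (Metric.closedBall 0 (2 * m))) ≤ ENNReal.ofReal ε ∧
          c * ε / m ^ ((1 : ℝ) + (d : ℝ) / p.toReal) ≤
            matchDist θ (ψ (fun x =>
              (∑ ℓ, a ℓ *
                Complex.exp ((2 * Real.pi *
                    (inner ℝ (θ ℓ) (x : EuclideanSpace ℝ (Fin d)) : ℝ) : ℝ)
                  * Complex.I)) + η x)) := by
  obtain ⟨i⟩ : Nonempty (Fin d) := ⟨⟨0, hd⟩⟩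
  set V : ℝ := max (volume (ball (0 : EuclideanSpace ℝ (Fin d)) 1)).toReal 1
  have hV : 1 ≤ V := le_max_right _ _
  have hK : 1 ≤ 2 ^ d * V := one_le_mul_of_one_le_of_one_le (one_le_pow₀ one_le_two) hV
  refine ⟨1 / (8 * π * (2 ^ d * V)), by positivity, 1, one_pos, ?_⟩
  intro s hs β hβ m hm p hp ε hε hεm ψ
  have hs₂ : (2 : ℝ) ≤ s := by exact_mod_cast hs
  have hm₀ : 0 < m := by nlinarith
  set q : ℝ := (d : ℝ) / p.toReal
  have hmq : 0 < m ^ q := rpow_pos_of_pos hm₀ q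
  set t : ℝ := ε / (4 * π * (2 ^ d * V) * (m * m ^ q)) with ht
  have htm : t ≤ β / m :=
    calc t ≤ m ^ q / (4 * π * (2 ^ d * V) * (m * m ^ q)) :=
          div_le_div_of_nonneg_right (by simpa using hεm) (by positivity)
      _ = 1 / (4 * π * (2 ^ d * V)) / m := by field_simp
      _ ≤ β / m := by
        have : 1 ≤ 4 * π * (2 ^ d * V) := by nlinarith [pi_gt_three]
        gcongr
        rw [div_le_iff₀ (by positivity)]
        nlinarith
  obtain ⟨θ, η, hθ, hsep, hη, hηp, hψ⟩ :=
    exists_config_noise_half_le_matchDist i (by omega) (by linarith) hm₀ hm (by positivity) htm hp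
      (by positivity : (0 : ℝ) ≤ 2 * m) ψ
  refine ⟨θ, 1, η, hθ, hsep, by simp, ⟨⟨0, by omega⟩, by simp⟩, hη,
    hηp.trans (ENNReal.ofReal_le_ofReal ?_), ?_⟩
  · calc V * (2 * m) ^ q * (2 * π * (2 * m) * t) = V * 2 ^ q * m ^ q * (4 * π * m * t) := by
          rw [mul_rpow two_pos.le hm₀.le]; ring
      _ ≤ V * 2 ^ d * m ^ q * (4 * π * m * t) := by
          gcongr; exact rpow_div_toReal_le_pow one_le_two d hp
      _ = ε := by rw [ht]; field_simp
  · calc 1 / (8 * π * (2 ^ d * V)) * ε / m ^ (1 + q) = t / 2 := by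
          rw [rpow_add hm₀, rpow_one, ht]
          field_simp
          ring
      _ ≤ _ := hψ
end
end
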